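/- arXiv:2111.09671 — 2 statements merged into one kernel-verified Lean document; each statement's English description precedes it below -/
import Mathlib

section
/- For all integers n ≥ r ≥ d ≥ 2 with r ≥ (1 − 1/d)·n, u(n, r, d) = 2^{n − (n−r)d}·(2^d − 1)^{n − r}; that is, the maximum cardinality of a family of subsets of [n] not having property U(r+1, d) equals 2^{n − (n−r)d}·(2^d − 1)^{n − r}. -/
/-- `F` shatters `I` : the trace of `F` on `I` has full size `2^|I|`. -/
def Shatters {n : ℕ} (F : Finset (Finset (Fin n))) (I : Finset (Fin n)) : Prop :=
  (F.image fun A => A ∩ I).card = 2 ^ I.card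

/-- `I` is `d`-universal for `F`. -/
def DUniversal {n : ℕ} (F : Finset (Finset (Fin n))) (d : ℕ) (I : Finset (Fin n)) : Prop :=
  d ≤ I.card ∧ ∀ J ⊆ I, J.card = d → Shatters F J

/-- `F` has property `U(r, d)` : there is a `d`-universal set of size `r`. -/
def HasU {n : ℕ} (F : Finset (Finset (Fin n))) (r d : ℕ) : Prop :=
  ∃ I : Finset (Fin n), I.card = r ∧ DUniversal F d I

/-- `u n r d` : the maximum cardinality of a family of subsets of `[n]`
not having property `U(r+1, d)`. -/
noncomputable def uMax (n r d : ℕ) : ℕ :=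
  sSup {m | ∃ F : Finset (Finset (Fin n)), ¬ HasU F (r + 1) d ∧ F.card = m}

/-!
Upper bound. By Pajor's lemma `#F ≤ #F.shatterer`, and the shatterer is a down-set. If `F` has
no `d`-universal `(r + 1)`-set, every set of fewer than `n - r` points misses some `d`-set not
shattered by `F` (its complement contains an `(r + 1)`-set), so the family `N` of these
non-shattered `d`-sets has transversal number at least `n - r`, and no member of the shatterer
contains a member of `N`. Splitting on the vertices of one edge at a time shows that at most
`2 ^ n * (1 - 2 ^ (-d)) ^ k` subsets of `[n]` contain no member of a family of sets of size at most
`d` with transversal number at least `k`.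

Lower bound. Take `n - r` pairwise disjoint `d`-blocks and all sets containing no block. The
complement of an `(r + 1)`-set has fewer than `n - r` points, so it misses a block; that block lies
inside the `(r + 1)`-set and is not shattered.
-/

open Finset hiding Shatters

section Avoiders

variable {α : Type*}

/-- `k` is at most the transversal number of `N`. -/
def NoSmallTransversal (N : Finset (Finset α)) (k : ℕ) : Prop :=
  ∀ C : Finset α, #C < k → ∃ f ∈ N, Disjoint f C

lemma noSmallTransversal_of_pairwiseDisjoint {N : Finset (Finset α)}
    (h : (N : Set (Finset α)).PairwiseDisjoint id) : NoSmallTransversal N #N := by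
  intro C hC
  by_contra! hmeet
  refine (card_le_card_of_forall_subsingleton (fun f x => x ∈ f)
    (fun f hf => ?_) (fun x _ f hf f' hf' => ?_)).not_gt hC
  · obtain ⟨x, hxf, hxC⟩ := not_disjoint_iff.1 (hmeet f hf)
    exact ⟨x, hxC, hxf⟩
  · by_contra hne
    exact disjoint_left.1 (h hf.1 hf'.1 hne) hf.2 hf'.2

variable [DecidableEq α]

def avoiders (V : Finset α) (N : Finset (Finset α)) : Finset (Finset α) :=
  V.powerset.filter fun S => ∀ f ∈ N, ¬f ⊆ S

variable {V S B : Finset α} {N : Finset (Finset α)} {d k : ℕ}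

lemma mem_avoiders : S ∈ avoiders V N ↔ S ⊆ V ∧ ∀ f ∈ N, ¬f ⊆ S := by
  rw [avoiders, mem_filter, mem_powerset]

lemma card_avoiders_le : #(avoiders V N) ≤ 2 ^ #V :=
  (card_filter_le _ _).trans_eq (card_powerset V)

lemma avoiders_eq_empty_of_empty_mem (h : ∅ ∈ N) : avoiders V N = ∅ :=
  eq_empty_of_forall_notMem fun _ hS => (mem_avoiders.1 hS).2 ∅ h (empty_subset _)

lemma card_avoiders_le_add (v : α) :
    #(avoiders V N) ≤ #(avoiders (V.erase v) (N.filter (v ∉ ·)))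
      + #(avoiders (V.erase v) (N.image (·.erase v))) := by
  rw [← card_filter_add_card_filter_not (v ∉ ·)]
  refine add_le_add (card_le_card fun S hS => ?_) ?_
  · simp only [mem_filter, mem_avoiders] at hS ⊢
    exact ⟨subset_erase.2 ⟨hS.1.1, hS.2⟩, fun f hf => hS.1.2 f hf.1⟩
  refine card_le_card_of_injOn (fun S : Finset α => S.erase v) (fun S hS => ?_)
    (fun S hS T hT hST => ?_)
  · simp only [mem_coe, mem_filter, mem_avoiders, not_not] at hS
    refine mem_avoiders.2 ⟨erase_subset_erase v hS.1.1, ?_⟩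
    simp only [mem_image, forall_exists_index, and_imp, forall_apply_eq_imp_iff₂]
    exact fun f hf hfS => hS.1.2 f hf (insert_erase hS.2 ▸ subset_insert_iff.2 hfS)
  · simp only [mem_coe, mem_filter, not_not] at hS hT
    rw [← insert_erase hS.2, ← insert_erase hT.2]
    exact congrArg (insert v) hST

lemma NoSmallTransversal.filter_notMem (h : NoSmallTransversal N (k + 1)) (v : α) :
    NoSmallTransversal (N.filter (v ∉ ·)) k := by
  intro C hC
  obtain ⟨f, hf, hfC⟩ := h (insert v C) ((card_insert_le v C).trans_lt (by omega))
  rw [disjoint_insert_right] at hfC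
  exact ⟨f, mem_filter.2 ⟨hf, hfC.1⟩, hfC.2⟩

lemma NoSmallTransversal.image_erase (h : NoSmallTransversal N k) (v : α) :
    NoSmallTransversal (N.image (·.erase v)) k := by
  intro C hC
  obtain ⟨f, hf, hfC⟩ := h C hC
  exact ⟨f.erase v, mem_image_of_mem _ hf, disjoint_of_subset_left (erase_subset v f) hfC⟩

lemma two_pow_sub_one_mul_two_pow_le {m : ℕ} (h : m ≤ d) :
    (2 ^ m - 1) * 2 ^ (d - m) ≤ 2 ^ d - 1 := by
  rw [Nat.sub_one_mul, ← pow_add, Nat.add_sub_cancel' h]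
  exact Nat.sub_le_sub_left Nat.one_le_two_pow _

/-- Cleared of denominators:
`#(avoiders V N) ≤ 2 ^ #V * (1 - 2 ^ (-#e)) * (1 - 2 ^ (-d)) ^ k`. -/
lemma card_avoiders_mul_le_of_mem
    (hA : ∀ (V : Finset α) (N : Finset (Finset α)), (∀ f ∈ N, f ⊆ V ∧ #f ≤ d) →
      NoSmallTransversal N k → #(avoiders V N) * 2 ^ (k * d) ≤ 2 ^ #V * (2 ^ d - 1) ^ k)
    {e : Finset α} : ∀ {V : Finset α} {N : Finset (Finset α)}, e ∈ N →
      (∀ f ∈ N, f ⊆ V ∧ #f ≤ d) → NoSmallTransversal N (k + 1) →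
      #(avoiders V N) * 2 ^ (k * d) * 2 ^ #e ≤ 2 ^ #V * (2 ^ #e - 1) * (2 ^ d - 1) ^ k := by
  induction e using Finset.strongInduction with
  | H e ih =>
    intro V N he hN hτ
    obtain rfl | ⟨v, hv⟩ := e.eq_empty_or_nonempty
    · simp [avoiders_eq_empty_of_empty_mem he]
    -- Sets avoiding `v` only have to avoid the edges missing `v`, at the cost of one unit of
    -- transversal number; sets containing `v` avoid the edges with `v` deleted, among them the
    -- smaller edge `e.erase v`.
    have h₀ := hA (V.erase v) (N.filter (v ∉ ·))
      (fun f hf => ⟨subset_erase.2 ⟨(hN f (mem_filter.1 hf).1).1, (mem_filter.1 hf).2⟩,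
        (hN f (mem_filter.1 hf).1).2⟩) (hτ.filter_notMem v)
    have h₁ := ih (e.erase v) (erase_ssubset hv) (mem_image_of_mem (·.erase v) he)
      (by
        simp only [mem_image, forall_exists_index, and_imp, forall_apply_eq_imp_iff₂]
        exact fun f hf => ⟨erase_subset_erase v (hN f hf).1, (card_erase_le).trans (hN f hf).2⟩)
      (hτ.image_erase v)
    obtain ⟨m, hm⟩ : ∃ m, #e = m + 1 := Nat.exists_eq_add_one.2 (card_pos.2 ⟨v, hv⟩)
    rw [card_erase_of_mem hv, hm, Nat.add_sub_cancel] at h₁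
    rw [← card_erase_add_one ((hN e he).1 hv), hm]
    have h2m : 1 ≤ 2 ^ m := Nat.one_le_two_pow
    calc #(avoiders V N) * 2 ^ (k * d) * 2 ^ (m + 1)
        ≤ (#(avoiders (V.erase v) (N.filter (v ∉ ·)))
            + #(avoiders (V.erase v) (N.image (·.erase v)))) * 2 ^ (k * d) * 2 ^ (m + 1) := by
          gcongr; exact card_avoiders_le_add v
      _ = #(avoiders (V.erase v) (N.filter (v ∉ ·))) * 2 ^ (k * d) * 2 ^ (m + 1)
            + 2 * (#(avoiders (V.erase v) (N.image (·.erase v))) * 2 ^ (k * d) * 2 ^ m) := by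
          ring
      _ ≤ 2 ^ #(V.erase v) * (2 ^ d - 1) ^ k * 2 ^ (m + 1)
            + 2 * (2 ^ #(V.erase v) * (2 ^ m - 1) * (2 ^ d - 1) ^ k) := by
          gcongr
      _ = 2 ^ (#(V.erase v) + 1) * (2 ^ (m + 1) - 1) * (2 ^ d - 1) ^ k := by
          have h2m' : 1 ≤ 2 ^ (m + 1) := Nat.one_le_two_pow
          zify [h2m, h2m']
          ring

theorem card_avoiders_mul_le (d : ℕ) : ∀ (k : ℕ) (V : Finset α) (N : Finset (Finset α)),
    (∀ f ∈ N, f ⊆ V ∧ #f ≤ d) → NoSmallTransversal N k →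
      #(avoiders V N) * 2 ^ (k * d) ≤ 2 ^ #V * (2 ^ d - 1) ^ k
  | 0, _, _, _, _ => by simpa using card_avoiders_le
  | k + 1, V, N, hN, hτ => by
    obtain ⟨e, he, -⟩ := hτ ∅ (by simp)
    have hed : #e ≤ d := (hN e he).2
    calc #(avoiders V N) * 2 ^ ((k + 1) * d)
        = #(avoiders V N) * 2 ^ (k * d) * 2 ^ #e * 2 ^ (d - #e) := by
          rw [mul_assoc _ (2 ^ #e), ← pow_add, Nat.add_sub_cancel' hed, mul_assoc, ← pow_add,
            add_one_mul]
      _ ≤ 2 ^ #V * (2 ^ #e - 1) * (2 ^ d - 1) ^ k * 2 ^ (d - #e) :=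
          Nat.mul_le_mul_right _
            (card_avoiders_mul_le_of_mem (card_avoiders_mul_le d k) he hN hτ)
      _ = 2 ^ #V * ((2 ^ #e - 1) * 2 ^ (d - #e)) * (2 ^ d - 1) ^ k := by ring
      _ ≤ 2 ^ #V * (2 ^ d - 1) * (2 ^ d - 1) ^ k := by
          gcongr; exact two_pow_sub_one_mul_two_pow_le hed
      _ = 2 ^ #V * (2 ^ d - 1) ^ (k + 1) := by ring

theorem card_avoiders_le_of_noSmallTransversal (hN : ∀ f ∈ N, f ⊆ V ∧ #f ≤ d)
    (hτ : NoSmallTransversal N k) (hkd : k * d ≤ #V) :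
    #(avoiders V N) ≤ 2 ^ (#V - k * d) * (2 ^ d - 1) ^ k := by
  refine Nat.le_of_mul_le_mul_right ?_ (Nat.two_pow_pos (k * d))
  calc #(avoiders V N) * 2 ^ (k * d) ≤ 2 ^ #V * (2 ^ d - 1) ^ k :=
        card_avoiders_mul_le d k V N hN hτ
    _ = 2 ^ (#V - k * d) * (2 ^ d - 1) ^ k * 2 ^ (k * d) := by
        rw [mul_right_comm, ← pow_add, Nat.sub_add_cancel hkd]

lemma card_avoiders_insert (hB : B ⊆ V) (hdisj : ∀ f ∈ N, Disjoint f B) :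
    #(avoiders V (insert B N)) = (2 ^ #B - 1) * #(avoiders (V \ B) N) := by
  rw [← card_powerset B, ← card_erase_of_mem (mem_powerset_self B), ← card_product]
  refine card_nbij' (fun S => (S ∩ B, S \ B)) (fun p => p.1 ∪ p.2) ?_ ?_ ?_ ?_
  · intro S hS
    simp only [mem_coe, mem_avoiders, mem_insert, forall_eq_or_imp, mem_product, mem_erase,
      mem_powerset] at hS ⊢
    exact ⟨⟨fun h => hS.2.1 (inter_eq_right.1 h), inter_subset_right⟩,
      sdiff_subset_sdiff hS.1 subset_rfl, fun f hf hfS => hS.2.2 f hf (hfS.trans sdiff_subset)⟩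
  · rintro ⟨T, U⟩ h
    simp only [mem_coe, mem_avoiders, mem_insert, forall_eq_or_imp, mem_product, mem_erase,
      mem_powerset, subset_sdiff] at h ⊢
    obtain ⟨⟨hTB, hT⟩, ⟨hU, hUB⟩, hUN⟩ := h
    refine ⟨union_subset (hT.trans hB) hU, fun hBTU => hTB (hT.antisymm ?_),
      fun f hf hfTU => hUN f hf ?_⟩
    · exact (hUB.symm.left_le_of_le_sup_right hBTU)
    · exact (hdisj f hf).left_le_of_le_sup_left (union_subset_union hT subset_rfl |>.trans' hfTU)
  · intro S _
    exact sup_inf_sdiff S B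
  · rintro ⟨T, U⟩ h
    simp only [mem_coe, mem_avoiders, mem_product, mem_erase, mem_powerset, subset_sdiff] at h
    obtain ⟨⟨-, hT⟩, ⟨-, hUB⟩, -⟩ := h
    simp only [union_inter_distrib_right, union_sdiff_distrib, inter_eq_left.2 hT,
      disjoint_iff_inter_eq_empty.1 hUB, sdiff_eq_empty_iff_subset.2 hT, hUB.sdiff_eq_left,
      union_empty, empty_union]

lemma card_avoiders_of_pairwiseDisjoint (𝓑 : Finset (Finset α)) (hB : ∀ B ∈ 𝓑, B ⊆ V ∧ #B = d)
    (hdisj : (𝓑 : Set (Finset α)).PairwiseDisjoint id) :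
    #(avoiders V 𝓑) = 2 ^ (#V - #𝓑 * d) * (2 ^ d - 1) ^ #𝓑 := by
  induction 𝓑 using Finset.induction_on generalizing V with
  | empty => simp [avoiders, card_powerset]
  | insert B 𝓑 hB𝓑 ih =>
    rw [coe_insert, Set.pairwiseDisjoint_insert] at hdisj
    have hdisjB : ∀ f ∈ 𝓑, Disjoint f B := fun f hf =>
      (hdisj.2 f hf (ne_of_mem_of_not_mem hf hB𝓑).symm).symm
    obtain ⟨hBV, hBd⟩ := hB B (mem_insert_self B 𝓑)
    have hB' : ∀ f ∈ 𝓑, f ⊆ V \ B ∧ #f = d := fun f hf =>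
      have hf' := hB f (mem_insert_of_mem hf)
      ⟨subset_sdiff.2 ⟨hf'.1, hdisjB f hf⟩, hf'.2⟩
    rw [card_avoiders_insert hBV hdisjB, ih hB' hdisj.1, card_sdiff_of_subset hBV, hBd,
      card_insert_of_notMem hB𝓑, Nat.sub_sub, add_one_mul, add_comm d]
    ring

lemma exists_pairwiseDisjoint_card_eq (hd : 0 < d) : ∀ (k : ℕ) (V : Finset α), k * d ≤ #V →
    ∃ 𝓑 : Finset (Finset α), #𝓑 = k ∧ (∀ B ∈ 𝓑, B ⊆ V ∧ #B = d) ∧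
      (𝓑 : Set (Finset α)).PairwiseDisjoint id
  | 0, _, _ => ⟨∅, by simp⟩
  | k + 1, V, hV => by
    obtain ⟨B, hBV, hBd⟩ := exists_subset_card_eq (le_of_add_le_right (add_one_mul k d ▸ hV))
    obtain ⟨𝓑, h𝓑k, h𝓑, hdisj⟩ := exists_pairwiseDisjoint_card_eq hd k (V \ B)
      (by rw [card_sdiff_of_subset hBV, hBd]; rw [add_one_mul] at hV; omega)
    have hB𝓑 : B ∉ 𝓑 := fun hB => by
      obtain ⟨x, hx⟩ := card_pos.1 (hBd ▸ hd : 0 < #B)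
      exact (mem_sdiff.1 ((h𝓑 B hB).1 hx)).2 hx
    refine ⟨insert B 𝓑, by rw [card_insert_of_notMem hB𝓑, h𝓑k], ?_, ?_⟩
    · simp only [mem_insert, forall_eq_or_imp]
      exact ⟨⟨hBV, hBd⟩, fun f hf => ⟨(h𝓑 f hf).1.trans sdiff_subset, (h𝓑 f hf).2⟩⟩
    · rw [coe_insert, Set.pairwiseDisjoint_insert]
      exact ⟨hdisj, fun f hf _ => (disjoint_of_subset_right (h𝓑 f hf).1 disjoint_sdiff)⟩

end Avoiders

section UniversalSets

variable {n : ℕ}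

lemma shatters_iff_finset_shatters (F : Finset (Finset (Fin n))) (I : Finset (Fin n)) :
    Shatters F I ↔ F.Shatters I := by
  have hsub : F.image (I ∩ ·) ⊆ I.powerset := fun _ h => by
    obtain ⟨A, -, rfl⟩ := mem_image.1 h
    exact mem_powerset.2 inter_subset_left
  rw [Shatters, Finset.shatters_iff, ← card_powerset]
  simp_rw [inter_comm _ I]
  exact ⟨fun h => eq_of_subset_of_card_le hsub h.ge, fun h => by rw [h]⟩

theorem card_le_of_not_hasU {r d : ℕ} (hkd : (n - r) * d ≤ n) {F : Finset (Finset (Fin n))}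
    (hF : ¬HasU F (r + 1) d) :
    #F ≤ 2 ^ (n - (n - r) * d) * (2 ^ d - 1) ^ (n - r) := by
  set N := (powersetCard d univ).filter fun J => ¬F.Shatters J
  have hτ : NoSmallTransversal N (n - r) := by
    intro C hC
    have hdr : d ≤ r + 1 := by
      have hk : 1 ≤ n - r := by omega
      have hn : n = n - r + r := by omega
      generalize n - r = k at hk hn hkd
      nlinarith
    obtain ⟨I, hIC, hI⟩ := exists_subset_card_eq (s := Cᶜ) (n := r + 1)
      (by rw [card_compl, Fintype.card_fin]; omega)
    have hIU : ¬DUniversal F d I := fun hU => hF ⟨I, hI, hU⟩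
    simp only [DUniversal, hI, hdr, true_and, not_forall, shatters_iff_finset_shatters] at hIU
    obtain ⟨J, hJI, hJ, hJF⟩ := hIU
    exact ⟨J, mem_filter.2 ⟨mem_powersetCard.2 ⟨subset_univ J, hJ⟩, hJF⟩,
      subset_compl_iff_disjoint_right.1 (hJI.trans hIC)⟩
  have hshatterer : F.shatterer ⊆ avoiders univ N := fun S hS =>
    mem_avoiders.2 ⟨subset_univ S, fun J hJ hJS =>
      (mem_filter.1 hJ).2 (mem_shatterer.1 (isLowerSet_shatterer F hJS (mem_coe.2 hS)))⟩
  calc #F ≤ #F.shatterer := card_le_card_shatterer F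
    _ ≤ #(avoiders univ N) := card_le_card hshatterer
    _ ≤ 2 ^ (n - (n - r) * d) * (2 ^ d - 1) ^ (n - r) := by
        simpa using card_avoiders_le_of_noSmallTransversal (V := univ)
          (fun J hJ => ⟨subset_univ J, (mem_powersetCard.1 (mem_filter.1 hJ).1).2.le⟩) hτ
          (by simpa using hkd)

theorem exists_not_hasU_card_eq {r d : ℕ} (hd : 0 < d) (hkd : (n - r) * d ≤ n) :
    ∃ F : Finset (Finset (Fin n)), ¬HasU F (r + 1) d ∧
      #F = 2 ^ (n - (n - r) * d) * (2 ^ d - 1) ^ (n - r) := by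
  obtain ⟨𝓑, h𝓑k, h𝓑, hdisj⟩ :=
    exists_pairwiseDisjoint_card_eq hd (n - r) (univ : Finset (Fin n)) (by simpa using hkd)
  refine ⟨avoiders univ 𝓑, ?_, by simp [card_avoiders_of_pairwiseDisjoint 𝓑 h𝓑 hdisj, h𝓑k]⟩
  rintro ⟨I, hI, -, hU⟩
  have hIn : r + 1 ≤ n := hI ▸ (card_le_univ I).trans_eq (Fintype.card_fin n)
  have hIc : #Iᶜ < #𝓑 := by
    rw [card_compl, Fintype.card_fin, hI, h𝓑k]
    omega
  obtain ⟨B, hB, hBI⟩ := noSmallTransversal_of_pairwiseDisjoint hdisj Iᶜ hIc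
  obtain ⟨A, hA, hBA⟩ := ((shatters_iff_finset_shatters _ B).1
    (hU B (disjoint_compl_right_iff.1 hBI) (h𝓑 B hB).2)).exists_superset
  exact (mem_avoiders.1 hA).2 B hB hBA

end UniversalSets

theorem stmt_5_general (n r d : ℕ) (hd : 2 ≤ d)
    (hlarge : (d - 1) * n ≤ d * r) :
    uMax n r d = 2 ^ (n - (n - r) * d) * (2 ^ d - 1) ^ (n - r) := by
  have hkd : (n - r) * d ≤ n := by
    rw [Nat.sub_one_mul] at hlarge
    rw [Nat.sub_mul, mul_comm n, mul_comm r]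
    omega
  obtain ⟨F, hF, hFcard⟩ := exists_not_hasU_card_eq (by omega) hkd
  refine IsGreatest.csSup_eq ⟨⟨F, hF, hFcard⟩, ?_⟩
  rintro m ⟨G, hG, rfl⟩
  exact card_le_of_not_hasU hkd hG

theorem stmt_5 (n r d : ℕ) (hd : 2 ≤ d) (hdr : d ≤ r) (hrn : r ≤ n)
    (hlarge : (d - 1) * n ≤ d * r) :
    uMax n r d = 2 ^ (n - (n - r) * d) * (2 ^ d - 1) ^ (n - r) :=
  stmt_5_general n r d hd hlarge
end

section
/- Let 1 ≤ d ≤ n and let f : {0,1}^n → {0,1} be an affine disperser for dimension d + 1. If f = φ_1 ∨ φ_2 ∨ ⋯ ∨ φ_m where each φ_i is a 2-CNF formula in the variables x_1,…,x_n (i.e., f(x) = 1 if and only if some φ_i is satisfied by x), then m ≥ |f^{-1}(1)| / (n/d + 1)^d. -/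
/-- A literal is a pair (variable, required value); an assignment `x` satisfies a
clause (a finite set of literals, interpreted as their disjunction) if some literal
of the clause gets its required value. -/
def ClauseSat {n : ℕ} (C : Finset (Fin n × ZMod 2)) (x : Fin n → ZMod 2) : Prop :=
  ∃ l ∈ C, x l.1 = l.2

/-- The set of satisfying assignments of a CNF formula (a finite list of clauses,
interpreted as their conjunction). -/
def SatAssignments {n : ℕ} (φ : List (Finset (Fin n × ZMod 2))) :
    Set (Fin n → ZMod 2) :=
  {x | ∀ C ∈ φ, ClauseSat C x}

/-- A `k`-CNF formula: every clause has at most `k` literals. -/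
def IsKCnf {n : ℕ} (k : ℕ) (φ : List (Finset (Fin n × ZMod 2))) : Prop :=
  ∀ C ∈ φ, C.card ≤ k

/-- `f` is an affine disperser for dimension `d` : `f` is non-constant on every
affine subspace of `𝔽₂ⁿ` of dimension `d`. -/
def AffineDisperser {n : ℕ} (d : ℕ) (f : (Fin n → ZMod 2) → Bool) : Prop :=
  ∀ (W : Submodule (ZMod 2) (Fin n → ZMod 2)) (c : Fin n → ZMod 2),
    Module.finrank (ZMod 2) W = d →
    ∃ u ∈ W, ∃ v ∈ W, f (c + u) ≠ f (c + v)

/-!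
The solution set of a 2-CNF formula is closed under coordinatewise majority. A majority-closed set
`A ⊆ 𝔽₂ⁿ` that shatters a set `S` of coordinates contains an affine subspace of dimension `|S|`.
Induct on `S`: for `a ∈ S`, let `K` be the set of coordinates `b` such that `x b - x a` is constant
on `A`. The points `x ∈ A` with `x a = 0` and `x + 𝟙_K ∈ A` again form a majority-closed set, which
still shatters `S \ {a}` (a minimal-distance argument), and `𝟙_K` supplies the extra direction.
Since `f` is constant on each `sat(φᵢ)` and is an affine disperser for dimension `d + 1`, no
`sat(φᵢ)` shatters `d + 1` coordinates.

For a majority-closed set, `S` is shattered as soon as every pair in `S` is, so the shattered sets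
are the cliques of a `K_{d+1}`-free graph on the `n` coordinates. By Pajor's lemma, `|sat(φᵢ)|` is
at most the number of shattered sets, hence at most the number of cliques of the Turán graph
`T(n, d)`, which is at most `(1 + n / d) ^ d` by AM-GM. Summing over `i` gives the bound.
-/

open Finset

section Majority

variable {α : Type*}

lemma ZMod.eq_zero_or_eq_one (a : ZMod 2) : a = 0 ∨ a = 1 := by
  revert a; decide

lemma ZMod.eq_of_ne_of_ne {a b c : ZMod 2} (hab : a ≠ b) (hca : c ≠ a) : c = b := by
  revert a b c; decide

lemma ZMod.eq_of_eq_one_iff {a b : ZMod 2} (h : a = 1 ↔ b = 1) : a = b := by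
  revert a b; decide

def maj (a b c : ZMod 2) : ZMod 2 := a * b + b * c + c * a

lemma maj_eq_of_two {a b c v : ZMod 2} (h : a = v ∧ b = v ∨ b = v ∧ c = v ∨ c = v ∧ a = v) :
    maj a b c = v := by
  revert a b c v; decide

lemma maj_add (a b c e : ZMod 2) : maj (a + e) (b + e) (c + e) = maj a b c + e := by
  revert a b c e; decide

def majority (x y z : α → ZMod 2) : α → ZMod 2 := fun i => maj (x i) (y i) (z i)

def IsMajorityClosed (A : Set (α → ZMod 2)) : Prop :=
  ∀ x ∈ A, ∀ y ∈ A, ∀ z ∈ A, majority x y z ∈ A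

lemma majority_comm (x y z : α → ZMod 2) : majority x y z = majority y x z := by
  funext i; simp only [majority, maj]; ring

lemma majority_add (x y z t : α → ZMod 2) :
    majority (x + t) (y + t) (z + t) = majority x y z + t :=
  funext fun i => maj_add (x i) (y i) (z i) (t i)

lemma eq_or_eq_or_eq_of_card_le_two {β : Type*} [DecidableEq β] {C : Finset β} (hC : #C ≤ 2)
    {a b c : β} (ha : a ∈ C) (hb : b ∈ C) (hc : c ∈ C) : a = b ∨ b = c ∨ c = a := by
  by_contra! h
  have : #{a, b, c} ≤ #C := card_le_card (by simp [insert_subset_iff, ha, hb, hc])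
  rw [card_eq_three.mpr ⟨a, b, c, h.1, h.2.2.symm, h.2.1, rfl⟩] at this
  omega

theorem isMajorityClosed_satAssignments {n : ℕ} {φ : List (Finset (Fin n × ZMod 2))}
    (hφ : IsKCnf 2 φ) : IsMajorityClosed (SatAssignments φ) := by
  intro x hx y hy z hz C hC
  obtain ⟨l, hl, hxl⟩ := hx C hC
  obtain ⟨l', hl', hyl⟩ := hy C hC
  obtain ⟨l'', hl'', hzl⟩ := hz C hC
  rcases eq_or_eq_or_eq_of_card_le_two (hφ C hC) hl hl' hl'' with rfl | rfl | rfl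
  · exact ⟨l, hl, maj_eq_of_two (.inl ⟨hxl, hyl⟩)⟩
  · exact ⟨l', hl', maj_eq_of_two (.inr (.inl ⟨hyl, hzl⟩))⟩
  · exact ⟨l'', hl'', maj_eq_of_two (.inr (.inr ⟨hzl, hxl⟩))⟩

end Majority

section Shattering

variable {α : Type*} {A : Set (α → ZMod 2)}

def ShattersCoords (A : Set (α → ZMod 2)) (S : Finset α) : Prop :=
  ∀ τ : α → ZMod 2, ∃ x ∈ A, ∀ i ∈ S, x i = τ i

lemma ShattersCoords.mono {S T : Finset α} (h : ShattersCoords A S) (hTS : T ⊆ S) :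
    ShattersCoords A T :=
  fun τ => (h τ).imp fun _ hx => ⟨hx.1, fun i hi => hx.2 i (hTS hi)⟩

def linkSet (A : Set (α → ZMod 2)) (a : α) : Set α :=
  {b | ∃ c, ∀ x ∈ A, x b = x a + c}

lemma mem_linkSet_self (a : α) : a ∈ linkSet A a := ⟨0, fun _ _ => (add_zero _).symm⟩

def flipSet (A : Set (α → ZMod 2)) (a : α) : Set (α → ZMod 2) :=
  {x | x ∈ A ∧ x a = 0 ∧ x + (linkSet A a).indicator 1 ∈ A}

lemma isMajorityClosed_flipSet (hA : IsMajorityClosed A) (a : α) :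
    IsMajorityClosed (flipSet A a) := by
  rintro x ⟨hx, hxa, hxK⟩ y ⟨hy, hya, hyK⟩ z ⟨hz, hza, hzK⟩
  refine ⟨hA x hx y hy z hz, maj_eq_of_two (.inl ⟨hxa, hya⟩), ?_⟩
  rw [← majority_add]
  exact hA _ hxK _ hyK _ hzK

variable [DecidableEq α]

lemma notMem_linkSet {a b : α} (hab : a ≠ b) (h : ShattersCoords A {a, b}) :
    b ∉ linkSet A a := by
  rintro ⟨c, hc⟩
  obtain ⟨x, hx, hxτ⟩ := h fun i => if i = a then 0 else c + 1
  have hxa : x a = 0 := by simpa using hxτ a (by simp)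
  have hxb : x b = c + 1 := by simpa [hab.symm] using hxτ b (by simp)
  have := hc x hx
  rw [hxa, hxb, zero_add] at this
  simp at this

theorem IsMajorityClosed.shattersCoords_of_pairs (hA : IsMajorityClosed A) {S : Finset α}
    (hS : 2 ≤ #S) (hpairs : ∀ a ∈ S, ∀ b ∈ S, a ≠ b → ShattersCoords A {a, b}) :
    ShattersCoords A S := by
  induction S using Finset.strongInduction with
  | H S ih =>
  obtain hS2 | hS3 := hS.eq_or_lt
  · obtain ⟨a, b, hab, rfl⟩ := card_eq_two.1 hS2.symm
    exact hpairs a (by simp) b (by simp) hab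
  obtain ⟨a, ha, b, hb, hab⟩ := one_lt_card.1 hS
  have hsub : ∀ c ∈ S, ShattersCoords A (S.erase c) := fun c hc =>
    ih _ (erase_ssubset hc) (by rw [card_erase_of_mem hc]; omega)
      fun x hx y hy => hpairs x (mem_of_mem_erase hx) y (mem_of_mem_erase hy)
  intro τ
  obtain ⟨x, hx, hxτ⟩ := hsub a ha τ
  obtain ⟨y, hy, hyτ⟩ := hsub b hb τ
  obtain ⟨z, hz, hzτ⟩ := hpairs a ha b hb hab τ
  -- every coordinate of `S` is matched by two of `x`, `y`, `z`
  refine ⟨majority x y z, hA x hx y hy z hz, fun i hi => maj_eq_of_two ?_⟩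
  by_cases hia : i = a
  · subst hia
    exact .inr (.inl ⟨hyτ i (mem_erase.2 ⟨hab, hi⟩), hzτ i (by simp)⟩)
  by_cases hib : i = b
  · subst hib
    exact .inr (.inr ⟨hzτ i (by simp), hxτ i (mem_erase.2 ⟨Ne.symm hab, hi⟩)⟩)
  exact .inl ⟨hxτ i (mem_erase.2 ⟨hia, hi⟩), hyτ i (mem_erase.2 ⟨hib, hi⟩)⟩

end Shattering

section Cube

variable {α : Type*} [Fintype α] {A : Set (α → ZMod 2)}

lemma hammingDist_majority_lt {p q z : α → ZMod 2} {b : α} (hb : p b ≠ q b) (hz : z b = q b) :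
    hammingDist (majority p q z) q < hammingDist p q := by
  refine card_lt_card ((ssubset_iff_of_subset fun i => ?_).2 ⟨b, by simpa using hb, ?_⟩)
  · simp only [mem_filter, mem_univ, true_and]
    exact mt fun h => maj_eq_of_two (.inl ⟨h, rfl⟩)
  · simp only [mem_filter, mem_univ, true_and, not_not]
    exact maj_eq_of_two (.inr (.inl ⟨rfl, hz⟩))

lemma IsMajorityClosed.exists_flip (hA : IsMajorityClosed A) {a : α} :
    ∀ p ∈ A, ∀ q ∈ A, p a = 0 → q a = 1 →
      ∃ p' ∈ A, p' a = 0 ∧ p' + (linkSet A a).indicator 1 ∈ A ∧ ∀ i, p i = q i → p' i = p i := by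
  intro p hp q hq hpa hqa
  induction hd : hammingDist p q using Nat.strong_induction_on generalizing p q with
  | _ d ih =>
  by_cases hflip : q = p + (linkSet A a).indicator 1
  · exact ⟨p, hp, hpa, hflip ▸ hq, fun _ _ => rfl⟩
  /- Otherwise `p` and `q` differ at some `b` outside the link of `a`; a point `z ∈ A` witnessing
  that `b` is not linked to `a` agrees at `b` with one of `p`, `q`, and taking the majority with
  `z` moves the other one closer. -/
  obtain ⟨b, hb⟩ := Function.ne_iff.mp hflip
  have hbK : b ∉ linkSet A a := by
    intro hbK
    obtain ⟨c, hc⟩ := id hbK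
    apply hb
    rw [Pi.add_apply, Set.indicator_of_mem hbK, hc q hq, hc p hp, hpa, hqa]
    simp only [Pi.one_apply]; ring
  have hpq : p b ≠ q b := by
    simpa [Set.indicator_of_notMem hbK, eq_comm] using hb
  have hbK' : ∀ c, ∃ z ∈ A, z b ≠ z a + c := by simpa [linkSet] using hbK
  obtain ⟨z, hz, hzb⟩ := hbK' (p b)
  have hm := hA p hp q hq z hz
  rcases ZMod.eq_zero_or_eq_one (z a) with hza | hza
  · rw [hza, zero_add] at hzb
    obtain ⟨p', hp', hp'a, hp'K, hagree⟩ :=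
      ih _ (hd ▸ hammingDist_majority_lt hpq (ZMod.eq_of_ne_of_ne hpq hzb)) _ hm q hq
        (maj_eq_of_two (.inr (.inr ⟨hza, hpa⟩))) hqa rfl
    refine ⟨p', hp', hp'a, hp'K, fun i hi => ?_⟩
    have hmi : majority p q z i = p i := maj_eq_of_two (.inl ⟨rfl, hi.symm⟩)
    rw [hagree i (hmi.trans hi), hmi]
  · rw [hza, add_comm] at hzb
    have hlt : hammingDist p (majority p q z) < d := by
      rw [hammingDist_comm, majority_comm, ← hd, hammingDist_comm p]
      exact hammingDist_majority_lt hpq.symm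
        (ZMod.eq_of_ne_of_ne (by simp : p b + 1 ≠ p b) hzb)
    obtain ⟨p', hp', hp'a, hp'K, hagree⟩ := ih _ hlt p hp _ hm hpa
      (maj_eq_of_two (.inr (.inl ⟨hqa, hza⟩))) rfl
    exact ⟨p', hp', hp'a, hp'K, fun i hi => hagree i (maj_eq_of_two (.inl ⟨rfl, hi.symm⟩)).symm⟩

variable [DecidableEq α]

lemma IsMajorityClosed.shattersCoords_flipSet (hA : IsMajorityClosed A) {a : α} {S : Finset α}
    (haS : a ∉ S) (hS : ShattersCoords A (insert a S)) : ShattersCoords (flipSet A a) S := by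
  intro τ
  obtain ⟨p, hp, hpτ⟩ := hS (Function.update τ a 0)
  obtain ⟨q, hq, hqτ⟩ := hS (Function.update τ a 1)
  obtain ⟨p', hp', hp'a, hp'K, hagree⟩ := hA.exists_flip p hp q hq
    (by simpa using hpτ a (mem_insert_self a S)) (by simpa using hqτ a (mem_insert_self a S))
  refine ⟨p', ⟨hp', hp'a, hp'K⟩, fun i hi => ?_⟩
  have hia : i ≠ a := ne_of_mem_of_not_mem hi haS
  have hpi : p i = τ i := by simpa [hia] using hpτ i (mem_insert_of_mem hi)
  have hqi : q i = τ i := by simpa [hia] using hqτ i (mem_insert_of_mem hi)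
  rw [hagree i (hpi.trans hqi.symm), hpi]

lemma IsMajorityClosed.exists_cube (hA : IsMajorityClosed A) {S : Finset α}
    (hS : ShattersCoords A S) :
    ∃ x, ∃ v : α → α → ZMod 2, (∀ i ∈ S, ∀ j ∈ S, v j i = if i = j then 1 else 0) ∧
      ∀ w ∈ Submodule.span (ZMod 2) (v '' S), x + w ∈ A := by
  induction S using Finset.induction_on generalizing A with
  | empty =>
    obtain ⟨x, hx, -⟩ := hS 0
    refine ⟨x, 0, by simp, fun w hw => ?_⟩
    rw [coe_empty, Set.image_empty, Submodule.span_empty, Submodule.mem_bot] at hw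
    rwa [hw, add_zero]
  | insert a S haS ih =>
    have hne : ∀ j ∈ S, j ≠ a := fun j hj => ne_of_mem_of_not_mem hj haS
    set K := linkSet A a
    obtain ⟨x, v, hv, hcube⟩ :=
      ih (isMajorityClosed_flipSet hA a) (hA.shattersCoords_flipSet haS hS)
    refine ⟨x, Function.update v a (K.indicator 1), ?_, fun w hw => ?_⟩
    · have hx : x ∈ flipSet A a := by simpa using hcube 0 (zero_mem _)
      have hva : ∀ j ∈ S, v j a = 0 := fun j hj => by
        -- both `x` and `x + v j` lie in `flipSet A a`, on the `0`-side of `a`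
        have hxv := (hcube (v j) (Submodule.subset_span ⟨j, hj, rfl⟩)).2.1
        rwa [Pi.add_apply, hx.2.1, zero_add] at hxv
      have hKa : K.indicator (1 : α → ZMod 2) a = 1 := Set.indicator_of_mem (mem_linkSet_self a) _
      have hKS : ∀ i ∈ S, K.indicator (1 : α → ZMod 2) i = 0 := fun i hi =>
        Set.indicator_of_notMem (notMem_linkSet (hne i hi).symm
          (hS.mono (insert_subset_insert a (singleton_subset_iff.2 hi)))) _
      intro i hi j hj
      rcases mem_insert.1 hi with rfl | hi' <;> rcases mem_insert.1 hj with rfl | hj'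
      · rw [Function.update_self, hKa, if_pos rfl]
      · rw [Function.update_of_ne (hne j hj'), hva j hj', if_neg (hne j hj').symm]
      · rw [Function.update_self, hKS i hi', if_neg (hne i hi')]
      · rw [Function.update_of_ne (hne j hj')]
        exact hv i hi' j hj'
    · have hvS : Function.update v a (K.indicator 1) '' S = v '' S :=
        Set.image_congr fun j hj => Function.update_of_ne (hne j hj) _ _
      rw [coe_insert, Set.image_insert_eq, Function.update_self, hvS,
        Submodule.mem_span_insert] at hw
      obtain ⟨c, y, hy, rfl⟩ := hw
      obtain ⟨hxy, -, hxyK⟩ := hcube y hy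
      rcases ZMod.eq_zero_or_eq_one c with rfl | rfl
      · simpa using hxy
      · convert hxyK using 1
        rw [one_smul]; abel

theorem IsMajorityClosed.exists_affineSubspace (hA : IsMajorityClosed A) {S : Finset α}
    (hS : ShattersCoords A S) :
    ∃ x, ∃ W : Submodule (ZMod 2) (α → ZMod 2),
      Module.finrank (ZMod 2) W = #S ∧ ∀ w ∈ W, x + w ∈ A := by
  obtain ⟨x, v, hv, hcube⟩ := hA.exists_cube hS
  have hli : LinearIndependent (ZMod 2) fun j : S => v j := by
    rw [Fintype.linearIndependent_iff]
    intro g hg i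
    have hgi := congrFun hg i
    rw [Finset.sum_apply, Finset.sum_eq_single i (fun j _ hji => ?_) (by simp)] at hgi
    · simpa [hv i i.2 i i.2] using hgi
    · simp [hv i i.2 j j.2, Subtype.ext_iff.not.1 hji.symm]
  refine ⟨x, _, ?_, hcube⟩
  rw [Set.image_eq_range]
  exact (finrank_span_eq_card hli).trans (Fintype.card_coe S)

end Cube

section Turan

/-- The number of cliques of the Turán graph `T(N, t)`: writing `N = q t + r` with `r < t`, it has
`r` parts of size `q + 1` and `t - r` parts of size `q`, and a clique picks at most one vertex
from each part. -/
def turanCliqueCount (N t : ℕ) : ℕ := (N / t + 2) ^ (N % t) * (N / t + 1) ^ (t - N % t)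

lemma turanCliqueCount_eq {q r t : ℕ} (hr : r < t) :
    turanCliqueCount (q * t + r) t = (q + 2) ^ r * (q + 1) ^ (t - r) := by
  have ht : 0 < t := by omega
  have hdiv : (q * t + r) / t = q := by
    rw [add_comm, Nat.add_mul_div_right _ _ ht, Nat.div_eq_of_lt hr, zero_add]
  have hmod : (q * t + r) % t = r := by
    rw [add_comm, Nat.add_mul_mod_self_right, Nat.mod_eq_of_lt hr]
  rw [turanCliqueCount, hdiv, hmod]

lemma turanCliqueCount_mul (q t : ℕ) : turanCliqueCount (q * t) t = (q + 1) ^ t := by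
  rcases t.eq_zero_or_pos with rfl | ht
  · simp [turanCliqueCount]
  · simpa using turanCliqueCount_eq (q := q) ht

lemma turanCliqueCount_zero_left (t : ℕ) : turanCliqueCount 0 t = 1 := by
  simpa using turanCliqueCount_mul 0 t

lemma turanCliqueCount_mono (t : ℕ) : Monotone (turanCliqueCount · t) := by
  refine monotone_nat_of_le_succ fun N => ?_
  rcases t.eq_zero_or_pos with rfl | ht
  · simp [turanCliqueCount, pow_succ]
  obtain ⟨q, r, hr, rfl⟩ : ∃ q r, r < t ∧ N = q * t + r :=
    ⟨N / t, N % t, Nat.mod_lt _ ht, by rw [mul_comm, Nat.div_add_mod]⟩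
  rw [turanCliqueCount_eq hr]
  obtain hr1 | rfl : r + 1 < t ∨ r + 1 = t := by omega
  · rw [add_assoc, turanCliqueCount_eq hr1, show t - r = t - (r + 1) + 1 by omega]
    calc (q + 2) ^ r * (q + 1) ^ (t - (r + 1) + 1)
        = (q + 2) ^ r * (q + 1) ^ (t - (r + 1)) * (q + 1) := by ring
      _ ≤ (q + 2) ^ r * (q + 1) ^ (t - (r + 1)) * (q + 2) := by gcongr; omega
      _ = _ := by ring
  · rw [show q * (r + 1) + r + 1 = (q + 1) * (r + 1) by ring, turanCliqueCount_mul,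
      Nat.add_sub_cancel_left, pow_one, pow_succ]
    exact Nat.mul_le_mul_left _ (by omega)

/-- Deleting a vertex `v` of minimum degree `M` from a `K_{t+2}`-free graph on `N + 1` vertices
(so that `(t + 1) M ≤ t (N + 1)`) splits its cliques into those of a graph on `N` vertices and
those of a `K_{t+1}`-free graph on the `M` neighbours of `v`; the Turán count obeys the matching
recursion. -/
lemma turanCliqueCount_add_le {N M t : ℕ} (h : (t + 1) * M ≤ t * (N + 1)) :
    turanCliqueCount N (t + 1) + turanCliqueCount M t ≤ turanCliqueCount (N + 1) (t + 1) := by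
  obtain ⟨q, r, hr, rfl⟩ : ∃ q r, r < t + 1 ∧ N = q * (t + 1) + r :=
    ⟨N / (t + 1), N % (t + 1), Nat.mod_lt _ t.succ_pos, by rw [mul_comm, Nat.div_add_mod]⟩
  rw [turanCliqueCount_eq hr]
  obtain hrt | rfl := Nat.lt_succ_iff_lt_or_eq.1 hr
  · have hM : M ≤ q * t + r := by nlinarith
    have hM' : turanCliqueCount M t ≤ turanCliqueCount (q * t + r) t := turanCliqueCount_mono t hM
    rw [turanCliqueCount_eq hrt] at hM'
    rw [add_assoc, turanCliqueCount_eq (by omega : r + 1 < t + 1),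
      show t + 1 - r = t - r + 1 by omega, show t + 1 - (r + 1) = t - r by omega]
    calc _ ≤ (q + 2) ^ r * (q + 1) ^ (t - r + 1) + (q + 2) ^ r * (q + 1) ^ (t - r) := by gcongr
      _ = _ := by ring
  · have hM : M ≤ (q + 1) * r := by nlinarith
    have hM' : turanCliqueCount M r ≤ turanCliqueCount ((q + 1) * r) r :=
      turanCliqueCount_mono r hM
    rw [turanCliqueCount_mul] at hM'
    rw [show q * (r + 1) + r + 1 = (q + 1) * (r + 1) by ring, turanCliqueCount_mul,
      Nat.add_sub_cancel_left, pow_one]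
    calc _ ≤ (q + 2) ^ r * (q + 1) + (q + 1 + 1) ^ r := by gcongr
      _ = _ := by ring

theorem turanCliqueCount_le_pow {t : ℕ} (N : ℕ) (ht : 0 < t) :
    (turanCliqueCount N t : ℝ) ≤ (1 + N / t) ^ t := by
  obtain ⟨q, r, hr, rfl⟩ : ∃ q r, r < t ∧ N = q * t + r :=
    ⟨N / t, N % t, Nat.mod_lt _ ht, by rw [mul_comm, Nat.div_add_mod]⟩
  have ht' : (0 : ℝ) < t := by exact_mod_cast ht
  have hrt : ((t - r : ℕ) : ℝ) = t - r := Nat.cast_sub hr.le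
  have hw : (r / t : ℝ) + (t - r : ℕ) / t = 1 := by rw [hrt]; field_simp; ring
  have hamgm := Real.geom_mean_le_arith_mean2_weighted (by positivity) (by positivity)
    (by positivity : (0 : ℝ) ≤ q + 2) (by positivity : (0 : ℝ) ≤ q + 1) hw
  have hmean : (r / t : ℝ) * (q + 2) + (t - r : ℕ) / t * (q + 1) =
      1 + ((q * t + r : ℕ) : ℝ) / t := by
    rw [hrt]; push_cast; field_simp; ring
  calc (turanCliqueCount (q * t + r) t : ℝ)
      = ((q + 2 : ℝ) ^ ((r : ℝ) / t) * (q + 1 : ℝ) ^ (((t - r : ℕ) : ℝ) / t)) ^ t := by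
        rw [turanCliqueCount_eq hr, mul_pow, ← Real.rpow_mul_natCast (by positivity),
          ← Real.rpow_mul_natCast (by positivity), div_mul_cancel₀ _ ht'.ne',
          div_mul_cancel₀ _ ht'.ne', Real.rpow_natCast, Real.rpow_natCast]
        push_cast; ring
    _ ≤ _ := by rw [← hmean]; gcongr

end Turan

namespace SimpleGraph

variable {V : Type*} [DecidableEq V] (G : SimpleGraph V) [DecidableRel G.Adj]

def cliquesIn (U : Finset V) : Finset (Finset V) := {s ∈ U.powerset | G.IsClique (s : Set V)}

variable {G}

lemma mem_cliquesIn {U s : Finset V} : s ∈ G.cliquesIn U ↔ s ⊆ U ∧ G.IsClique (s : Set V) := by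
  simp [cliquesIn]

lemma cliquesIn_empty : G.cliquesIn ∅ = {∅} := by
  ext s
  simp only [mem_cliquesIn, subset_empty, mem_singleton]
  exact ⟨And.left, fun h => ⟨h, by simp [h]⟩⟩

lemma card_cliquesIn_le_card_erase_add (U : Finset V) (v : V) :
    #(G.cliquesIn U) ≤ #(G.cliquesIn (U.erase v)) + #(G.cliquesIn {w ∈ U | G.Adj v w}) := by
  calc #(G.cliquesIn U)
      ≤ #(G.cliquesIn (U.erase v) ∪ (G.cliquesIn {w ∈ U | G.Adj v w}).image (insert v)) := by
        refine card_le_card fun s hs => ?_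
        obtain ⟨hsU, hs⟩ := mem_cliquesIn.1 hs
        rw [mem_union, mem_image]
        by_cases hv : v ∈ s
        · refine .inr ⟨s.erase v, mem_cliquesIn.2 ⟨fun w hw => ?_, ?_⟩, insert_erase hv⟩
          · obtain ⟨hwv, hws⟩ := mem_erase.1 hw
            exact mem_filter.2 ⟨hsU hws, hs hv hws hwv.symm⟩
          · exact hs.subset (by simp)
        · exact .inl (mem_cliquesIn.2 ⟨subset_erase.2 ⟨hsU, hv⟩, hs⟩)
    _ ≤ _ := (card_union_le _ _).trans (Nat.add_le_add_left card_image_le _)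

/-- A maximum clique `Q` dominates `U`, and the non-neighbourhood of each vertex of `Q` is at most
that of `v`. -/
lemma card_le_mul_card_nonAdj {U : Finset V} {t : ℕ} (hU : ∀ s ∈ G.cliquesIn U, #s ≤ t) {v : V}
    (hv : ∀ w ∈ U, #{x ∈ U | ¬G.Adj w x} ≤ #{x ∈ U | ¬G.Adj v x}) :
    #U ≤ t * #{x ∈ U | ¬G.Adj v x} := by
  obtain ⟨Q, hQ, hQmax⟩ := exists_max_image (G.cliquesIn U) card ⟨∅, by simp [mem_cliquesIn]⟩
  obtain ⟨hQU, hQ⟩ := mem_cliquesIn.1 hQ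
  have hcover : U ⊆ Q.biUnion fun q => {x ∈ U | ¬G.Adj q x} := by
    intro w hw
    by_contra hw'
    simp only [mem_biUnion, mem_filter, not_exists, not_and, hw, true_and, not_not] at hw'
    have hwQ : w ∉ Q := fun h => G.irrefl (hw' w h)
    have := hQmax (insert w Q) (mem_cliquesIn.2 ⟨insert_subset hw hQU,
      by rw [coe_insert]; exact hQ.insert fun q hq _ => (hw' q hq).symm⟩)
    rw [card_insert_of_notMem hwQ] at this
    omega
  calc #U ≤ #Q * #{x ∈ U | ¬G.Adj v x} :=
        (card_le_card hcover).trans (card_biUnion_le_card_mul _ _ _ fun q hq => hv q (hQU hq))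
    _ ≤ t * #{x ∈ U | ¬G.Adj v x} := Nat.mul_le_mul_right _ (hU Q (mem_cliquesIn.2 ⟨hQU, hQ⟩))

theorem card_cliquesIn_le (U : Finset V) (t : ℕ) (hU : ∀ s ∈ G.cliquesIn U, #s ≤ t) :
    #(G.cliquesIn U) ≤ turanCliqueCount #U t := by
  induction U using Finset.strongInduction generalizing t with
  | H U ih =>
  obtain rfl | hne := U.eq_empty_or_nonempty
  · simp [cliquesIn_empty, turanCliqueCount_zero_left]
  obtain ⟨v, hvU, hv⟩ := exists_max_image U (fun w => #{x ∈ U | ¬G.Adj w x}) hne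
  obtain ⟨t, rfl⟩ : ∃ t', t = t' + 1 :=
    Nat.exists_eq_add_one.2 (hU {v} (mem_cliquesIn.2 ⟨by simpa, by simp⟩))
  set N := {w ∈ U | G.Adj v w}
  have hN : N ⊂ U := (filter_subset _ U).ssubset_of_not_subset fun h =>
    G.irrefl (mem_filter.1 (h hvU)).2
  obtain ⟨n, hn⟩ : ∃ n, #U = n + 1 := Nat.exists_eq_add_one.2 (card_pos.2 hne)
  have hdeg : (t + 1) * #N ≤ t * (n + 1) := by
    have hsplit := card_filter_add_card_filter_not (s := U) (G.Adj v)
    have hdom := card_le_mul_card_nonAdj hU hv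
    nlinarith
  have herase := ih _ (erase_ssubset hvU) (t + 1) fun s hs =>
    hU s (mem_cliquesIn.2 ⟨(mem_cliquesIn.1 hs).1.trans (erase_subset _ _),
      (mem_cliquesIn.1 hs).2⟩)
  have hnbr := ih N hN t fun s hs => by
    obtain ⟨hsN, hs⟩ := mem_cliquesIn.1 hs
    have hvs : v ∉ s := fun h => G.irrefl (mem_filter.1 (hsN h)).2
    have := hU (insert v s) (mem_cliquesIn.2 ⟨insert_subset hvU (hsN.trans hN.subset),
      by rw [coe_insert]; exact hs.insert fun w hw _ => (mem_filter.1 (hsN hw)).2⟩)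
    rw [card_insert_of_notMem hvs] at this
    omega
  rw [card_erase_of_mem hvU, hn, Nat.add_sub_cancel] at herase
  rw [hn]
  exact (card_cliquesIn_le_card_erase_add U v).trans
    ((add_le_add herase hnbr).trans (turanCliqueCount_add_le hdeg))

end SimpleGraph

def ones {α : Type*} [Fintype α] (x : α → ZMod 2) : Finset α := {i | x i = 1}

lemma ones_injective {α : Type*} [Fintype α] :
    Function.Injective (ones : (α → ZMod 2) → Finset α) := fun x y hxy =>
  funext fun i => ZMod.eq_of_eq_one_iff (by simpa [ones] using congrArg (i ∈ ·) hxy)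

section Counting

variable {α : Type*} [DecidableEq α] {A : Set (α → ZMod 2)}

def shatterGraph (A : Set (α → ZMod 2)) : SimpleGraph α where
  Adj a b := a ≠ b ∧ ShattersCoords A {a, b}
  symm.symm a b h := ⟨h.1.symm, pair_comm a b ▸ h.2⟩
  loopless.irrefl _ h := h.1 rfl

lemma shatterGraph_adj {a b : α} :
    (shatterGraph A).Adj a b ↔ a ≠ b ∧ ShattersCoords A {a, b} := Iff.rfl

variable [Fintype α]

lemma shattersCoords_of_shatters {S : Finset α}
    (h : (A.toFinite.toFinset.image ones).Shatters S) : ShattersCoords A S := by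
  intro τ
  obtain ⟨u, hu, hSu⟩ := h (filter_subset (τ · = 1) S)
  obtain ⟨x, hx, rfl⟩ := mem_image.1 hu
  refine ⟨x, (Set.Finite.mem_toFinset _).1 hx, fun i hi => ZMod.eq_of_eq_one_iff ?_⟩
  simpa [ones, hi] using congrArg (i ∈ ·) hSu

theorem IsMajorityClosed.ncard_le_turanCliqueCount (hA : IsMajorityClosed A) {d : ℕ}
    (hd : 1 ≤ d) (hS : ∀ S : Finset α, #S = d + 1 → ¬ShattersCoords A S) :
    A.ncard ≤ turanCliqueCount (Fintype.card α) d := by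
  classical
  set 𝒜 := A.toFinite.toFinset.image ones
  have hsub : 𝒜.shatterer ⊆ (shatterGraph A).cliquesIn univ := fun S hS' =>
    SimpleGraph.mem_cliquesIn.2 ⟨subset_univ _, fun a ha b hb hab =>
      shatterGraph_adj.2 ⟨hab, (shattersCoords_of_shatters (mem_shatterer.1 hS')).mono
        (insert_subset_iff.2 ⟨ha, singleton_subset_iff.2 hb⟩)⟩⟩
  have hfree : ∀ s ∈ (shatterGraph A).cliquesIn univ, #s ≤ d := by
    intro s hs
    by_contra! hlt
    obtain ⟨T, hTs, hT⟩ := exists_subset_card_eq hlt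
    exact hS T hT (hA.shattersCoords_of_pairs (by omega) fun a ha b hb hab =>
      (shatterGraph_adj.1 ((SimpleGraph.mem_cliquesIn.1 hs).2 (hTs ha) (hTs hb) hab)).2)
  calc A.ncard = #𝒜 := by rw [card_image_of_injective _ ones_injective, Set.ncard_eq_toFinset_card]
    _ ≤ #𝒜.shatterer := card_le_card_shatterer 𝒜
    _ ≤ #((shatterGraph A).cliquesIn univ) := card_le_card hsub
    _ ≤ _ := SimpleGraph.card_cliquesIn_le _ _ hfree

end Counting

theorem stmt_14_general {n d m : ℕ} (hd1 : 1 ≤ d)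
    (f : (Fin n → ZMod 2) → Bool) (hf : AffineDisperser (d + 1) f)
    (φs : Fin m → List (Finset (Fin n × ZMod 2)))
    (h2 : ∀ i, IsKCnf 2 (φs i))
    (heq : ∀ x, f x = true ↔ ∃ i, x ∈ SatAssignments (φs i)) :
    ({x | f x = true}.ncard : ℝ) / ((n : ℝ) / d + 1) ^ d ≤ (m : ℝ) := by
  have hsat : ∀ i, ((SatAssignments (φs i)).ncard : ℝ) ≤ ((n : ℝ) / d + 1) ^ d := fun i => by
    have hA := isMajorityClosed_satAssignments (h2 i)
    have hS : ∀ S : Finset (Fin n), #S = d + 1 → ¬ShattersCoords (SatAssignments (φs i)) S := by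
      intro S hcard hS
      obtain ⟨x, W, hW, hxW⟩ := hA.exists_affineSubspace hS
      obtain ⟨u, hu, v, hv, hne⟩ := hf W x (hcard ▸ hW)
      exact hne (((heq _).2 ⟨i, hxW u hu⟩).trans ((heq _).2 ⟨i, hxW v hv⟩).symm)
    calc ((SatAssignments (φs i)).ncard : ℝ) ≤ turanCliqueCount n d := by
          exact_mod_cast (Fintype.card_fin n ▸ hA.ncard_le_turanCliqueCount hd1 hS)
      _ ≤ (1 + n / d) ^ d := turanCliqueCount_le_pow n hd1
      _ = _ := by rw [add_comm]
  have hunion : {x | f x = true} = ⋃ i, SatAssignments (φs i) := by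
    ext x; simp [heq]
  rw [div_le_iff₀ (by positivity), hunion]
  calc ((⋃ i, SatAssignments (φs i)).ncard : ℝ) ≤ ∑ i, ((SatAssignments (φs i)).ncard : ℝ) := by
        exact_mod_cast Set.ncard_iUnion_le_of_fintype _
    _ ≤ ∑ _i : Fin m, ((n : ℝ) / d + 1) ^ d := sum_le_sum fun i _ => hsat i
    _ = m * ((n : ℝ) / d + 1) ^ d := by simp

theorem stmt_14 {n d m : ℕ} (hd1 : 1 ≤ d) (hdn : d ≤ n)
    (f : (Fin n → ZMod 2) → Bool) (hf : AffineDisperser (d + 1) f)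
    (φs : Fin m → List (Finset (Fin n × ZMod 2)))
    (h2 : ∀ i, IsKCnf 2 (φs i))
    (heq : ∀ x, f x = true ↔ ∃ i, x ∈ SatAssignments (φs i)) :
    ({x | f x = true}.ncard : ℝ) / ((n : ℝ) / d + 1) ^ d ≤ (m : ℝ) :=
  stmt_14_general hd1 f hf φs h2 heq
end
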